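/- Assume a_1 ≠ 0, let b ∈ ℝ, let H̃ = e^{q_2−q_1}(H+b) and L̃ = L − (H̃/a_1)E_{21} be the transformed Hamiltonian and Lax matrix of the periodic three-particle Toda lattice. Then for all λ ∈ ℝ and μ ≠ 0: det L̃(λ,μ) = a_1a_2a_3·μ + (1 − H̃/a_1)·μ^{-1} + (λ−p_1)(λ−p_2)(λ−p_3) − a_1e^{q_1−q_2}(λ−p_3) − a_2e^{q_2−q_3}(λ−p_1) − a_3e^{q_3−q_1}(λ−p_2) + (H+b)(λ−p_3). In particular the coefficient of μ^{-1} is (a_1 − H̃)/a_1 and, as a polynomial in λ, the coefficient of λ in det L̃ − a_1a_2a_3μ − (1−H̃/a_1)μ^{-1} equals P²/2 + b, where P = p_1+p_2+p_3 (the Hamiltonian H no longer appears in this coefficient, being replaced by the constant b). -/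

import Mathlib

open Real Matrix

/-- The periodic three-particle Toda Hamiltonian. -/
noncomputable def todaH (a1 a2 a3 : ℝ) (z : (Fin 3 → ℝ) × (Fin 3 → ℝ)) : ℝ :=
  (1 / 2) * ((z.1 0) ^ 2 + (z.1 1) ^ 2 + (z.1 2) ^ 2)
    + a1 * exp (z.2 0 - z.2 1) + a2 * exp (z.2 1 - z.2 2)
    + a3 * exp (z.2 2 - z.2 0)

/-- The Toda Lax matrix `L(λ,μ)`. -/
noncomputable def todaL (a1 a2 a3 lam mu : ℝ) (z : (Fin 3 → ℝ) × (Fin 3 → ℝ)) :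
    Matrix (Fin 3) (Fin 3) ℝ :=
  !![lam - z.1 0, a1 * exp (z.2 0 - z.2 1), mu⁻¹;
     1, lam - z.1 1, a2 * exp (z.2 1 - z.2 2);
     mu * a3 * exp (z.2 2 - z.2 0), 1, lam - z.1 2]

/-- The transformed Hamiltonian `H̃ = e^{q₂−q₁}(H + b)`. -/
noncomputable def todaHt (a1 a2 a3 b : ℝ) (z : (Fin 3 → ℝ) × (Fin 3 → ℝ)) : ℝ :=
  exp (z.2 1 - z.2 0) * (todaH a1 a2 a3 z + b)

/-- The transformed Lax matrix `L̃ = L − (H̃/a₁)E₂₁`. -/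
noncomputable def todaLt (a1 a2 a3 b lam mu : ℝ) (z : (Fin 3 → ℝ) × (Fin 3 → ℝ)) :
    Matrix (Fin 3) (Fin 3) ℝ :=
  todaL a1 a2 a3 lam mu z
    - Matrix.single 1 0 (todaHt a1 a2 a3 b z / a1)

/-! Subtracting `(H̃/a₁)E₂₁` changes `det L` by `H̃/a₁` times the complementary minor
`a₁e^{q₁−q₂}(λ−p₃) − μ⁻¹` (the determinant is affine in a single entry), and since
`H̃ e^{q₁−q₂} = H + b` this turns the `μ⁻¹` coefficient into `1 − H̃/a₁` and adds
`(H + b)(λ − p₃)`. In the coefficient of `λ` the `½|p|²` and the potential terms of `H`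
then cancel against those of `det L`, leaving `P²/2 + b`. -/

theorem Matrix.det_fin_three_sub_single_one_zero {R : Type*} [CommRing R]
    (M : Matrix (Fin 3) (Fin 3) R) (c : R) :
    (M - single 1 0 c).det = M.det + c * (M 0 1 * M 2 2 - M 0 2 * M 2 1) := by
  simp only [det_fin_three, sub_apply, single_apply_same, ne_eq, Fin.reduceEq,
    not_false_eq_true, single_apply_of_row_ne, single_apply_of_col_ne, sub_zero]
  ring

theorem todaL_det (a1 a2 a3 lam : ℝ) {mu : ℝ} (hmu : mu ≠ 0) (p q : Fin 3 → ℝ) :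
    (todaL a1 a2 a3 lam mu (p, q)).det =
      a1 * a2 * a3 * mu + mu⁻¹ + (lam - p 0) * (lam - p 1) * (lam - p 2)
        - a1 * exp (q 0 - q 1) * (lam - p 2)
        - a2 * exp (q 1 - q 2) * (lam - p 0)
        - a3 * exp (q 2 - q 0) * (lam - p 1) := by
  have hcycle : exp (q 0 - q 1) * exp (q 1 - q 2) * exp (q 2 - q 0) = 1 := by
    rw [← exp_add, ← exp_add, ← exp_zero]
    ring_nf
  simp only [todaL, det_fin_three, of_apply, cons_val', cons_val_zero, cons_val_one,
    cons_val_two, head_cons, tail_cons, empty_val', cons_val_fin_one, head_fin_const]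
  field_simp
  linear_combination mu ^ 2 * a1 * a2 * a3 * hcycle

theorem todaHt_mul_exp (a1 a2 a3 b : ℝ) (p q : Fin 3 → ℝ) :
    todaHt a1 a2 a3 b (p, q) * exp (q 0 - q 1) = todaH a1 a2 a3 (p, q) + b := by
  rw [todaHt, mul_comm, ← mul_assoc, ← exp_add]
  simp

theorem todaLt_det (a1 a2 a3 b lam : ℝ) {mu : ℝ} (ha1 : a1 ≠ 0) (hmu : mu ≠ 0)
    (p q : Fin 3 → ℝ) :
    (todaLt a1 a2 a3 b lam mu (p, q)).det =
      a1 * a2 * a3 * mu + (1 - todaHt a1 a2 a3 b (p, q) / a1) * mu⁻¹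
        + (lam - p 0) * (lam - p 1) * (lam - p 2)
        - a1 * exp (q 0 - q 1) * (lam - p 2)
        - a2 * exp (q 1 - q 2) * (lam - p 0)
        - a3 * exp (q 2 - q 0) * (lam - p 1)
        + (todaH a1 a2 a3 (p, q) + b) * (lam - p 2) := by
  rw [todaLt, Matrix.det_fin_three_sub_single_one_zero, todaL_det a1 a2 a3 lam hmu,
    ← todaHt_mul_exp a1 a2 a3 b p q]
  simp only [todaL, of_apply, cons_val', cons_val_zero, cons_val_one, cons_val_two,
    head_cons, tail_cons, empty_val', cons_val_fin_one, head_fin_const]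
  field_simp
  ring

/-- the explicit formula for `det L̃(λ,μ)`; the coefficient of
`μ⁻¹` is `(a₁ − H̃)/a₁`, and the coefficient of `λ` in the residual cubic is
`P²/2 + b` (the Hamiltonian is replaced by the constant `b`). -/
theorem stmt_14 (a1 a2 a3 b mu : ℝ) (ha1 : a1 ≠ 0) (hmu : mu ≠ 0)
    (p q : Fin 3 → ℝ) :
    (∀ lam : ℝ,
      (todaLt a1 a2 a3 b lam mu (p, q)).det =
        a1 * a2 * a3 * mu + (1 - todaHt a1 a2 a3 b (p, q) / a1) * mu⁻¹
          + (lam - p 0) * (lam - p 1) * (lam - p 2)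
          - a1 * exp (q 0 - q 1) * (lam - p 2)
          - a2 * exp (q 1 - q 2) * (lam - p 0)
          - a3 * exp (q 2 - q 0) * (lam - p 1)
          + (todaH a1 a2 a3 (p, q) + b) * (lam - p 2)) ∧
    (1 - todaHt a1 a2 a3 b (p, q) / a1 = (a1 - todaHt a1 a2 a3 b (p, q)) / a1) ∧
    (∃ c2 c0 : ℝ, ∀ lam : ℝ,
      (todaLt a1 a2 a3 b lam mu (p, q)).det - a1 * a2 * a3 * mu
          - (1 - todaHt a1 a2 a3 b (p, q) / a1) * mu⁻¹ =
        lam ^ 3 + c2 * lam ^ 2 + ((p 0 + p 1 + p 2) ^ 2 / 2 + b) * lam + c0) := by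
  refine ⟨fun lam => todaLt_det a1 a2 a3 b lam ha1 hmu p q, one_sub_div ha1,
    -(p 0 + p 1 + p 2),
    -(p 0 * p 1 * p 2) + a1 * exp (q 0 - q 1) * p 2 + a2 * exp (q 1 - q 2) * p 0
      + a3 * exp (q 2 - q 0) * p 1 - (todaH a1 a2 a3 (p, q) + b) * p 2, fun lam => ?_⟩
  rw [todaLt_det a1 a2 a3 b lam ha1 hmu, todaH]
  ring
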